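/- arXiv:2101.00439 — 2 statements merged into one kernel-verified Lean document; each statement's English description precedes it below -/
import Mathlib

section
/- Let λ, μ > 0 and m(ξ', x_n) be the Lamé extension multiplier: m_j = e^{−|ξ'|x_n}(−i(λ+μ)ξ_j x_n/(2μ+λ) + iμξ_j/((2μ+λ)|ξ'|)) for j < n, m_n = e^{−|ξ'|x_n}(1 + (λ+μ)|ξ'|x_n/(2μ+λ)). Then the quantity (−(2μ+λ)∂_{x_n} m_n − λ Σ_{j<n} i ξ_j m_j) evaluated at x_n = 0 equals (2μ(λ+μ)/(λ+2μ))·|ξ'|. -/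
/-- The Fourier multiplier of the Lamé extension operator in the half-space:
for tangential indices `j` (`j < n`, the paper's 1,…,n−1),
`m_j(ξ',x_n) = e^{−|ξ'|x_n}(−i(λ+μ)ξ_j x_n/(2μ+λ) + iμξ_j/((2μ+λ)|ξ'|))`,
and for the normal index (`Fin.last n`),
`m_n(ξ',x_n) = e^{−|ξ'|x_n}(1 + (λ+μ)|ξ'|x_n/(2μ+λ))`. -/
noncomputable def lameMultiplier (n : ℕ) (lam mu : ℝ) (ξ : Fin n → ℝ) (xn : ℝ) :
    Fin (n + 1) → ℂ := fun j =>
  let r : ℝ := Real.sqrt (∑ k, ξ k ^ 2)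
  if h : (j : ℕ) < n then
    Complex.exp (-(r : ℂ) * (xn : ℂ)) *
      (-Complex.I * ((lam : ℂ) + (mu : ℂ)) * (ξ ⟨j, h⟩ : ℂ) * (xn : ℂ) / (2 * (mu : ℂ) + (lam : ℂ))
        + Complex.I * (mu : ℂ) * (ξ ⟨j, h⟩ : ℂ) / ((2 * (mu : ℂ) + (lam : ℂ)) * (r : ℂ)))
  else
    Complex.exp (-(r : ℂ) * (xn : ℂ)) *
      (1 + ((lam : ℂ) + (mu : ℂ)) * (r : ℂ) * (xn : ℂ) / (2 * (mu : ℂ) + (lam : ℂ)))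

/-- the Dirichlet-to-Neumann computation for the Lamé extension
multiplier: (−(2μ+λ)∂_{x_n}m_n − λ Σ_{j<n} iξ_j m_j)|_{x_n=0} = (2μ(λ+μ)/(λ+2μ))|ξ'|. -/
theorem lameMultiplier_DtN (n : ℕ) (lam mu : ℝ) (hlam : 0 < lam) (hmu : 0 < mu)
    (ξ : Fin n → ℝ) (hξ : ξ ≠ 0) :
    -(2 * (mu : ℂ) + (lam : ℂ)) *
        deriv (fun xn : ℝ => lameMultiplier n lam mu ξ xn (Fin.last n)) 0
      - (lam : ℂ) * ∑ j : Fin n,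
          Complex.I * (ξ j : ℂ) * lameMultiplier n lam mu ξ 0 j.castSucc
      = (2 * (mu : ℂ) * ((lam : ℂ) + (mu : ℂ)) / ((lam : ℂ) + 2 * (mu : ℂ))) *
          (Real.sqrt (∑ k, ξ k ^ 2) : ℂ) := by
  have hSpos : 0 < ∑ k, ξ k ^ 2 := by
    have : ∃ k, ξ k ≠ 0 := by
      by_contra h; push_neg at h; exact hξ (funext h)
    obtain ⟨k, hk⟩ := this
    exact Finset.sum_pos' (fun i _ => sq_nonneg _) ⟨k, Finset.mem_univ k, by positivity⟩
  set r : ℝ := Real.sqrt (∑ k, ξ k ^ 2) with hr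
  have hrpos : 0 < r := Real.sqrt_pos.mpr hSpos
  have hrC : (r : ℂ) ≠ 0 := by exact_mod_cast hrpos.ne'
  have hdR : (2 * mu + lam : ℝ) ≠ 0 := by positivity
  have hd : (2 * (mu : ℂ) + (lam : ℂ)) ≠ 0 := by exact_mod_cast hdR
  have hd2 : ((lam : ℂ) + 2 * (mu : ℂ)) ≠ 0 := by
    have : (lam + 2 * mu : ℝ) ≠ 0 := by positivity
    exact_mod_cast this
  -- derivative part
  have hg : HasDerivAt
      (fun z : ℂ => Complex.exp (-(r : ℂ) * z) *
        (1 + ((lam : ℂ) + (mu : ℂ)) * (r : ℂ) * z / (2 * (mu : ℂ) + (lam : ℂ))))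
      (-(r : ℂ) + ((lam : ℂ) + (mu : ℂ)) * (r : ℂ) / (2 * (mu : ℂ) + (lam : ℂ))) 0 := by
    have h1 : HasDerivAt (fun z : ℂ => Complex.exp (-(r : ℂ) * z))
        (Complex.exp (-(r : ℂ) * 0) * (-(r : ℂ) * 1)) 0 :=
      ((hasDerivAt_id (0 : ℂ)).const_mul (-(r : ℂ))).cexp
    have h2 : HasDerivAt
        (fun z : ℂ => 1 + ((lam : ℂ) + (mu : ℂ)) * (r : ℂ) * z / (2 * (mu : ℂ) + (lam : ℂ)))
        ((((lam : ℂ) + (mu : ℂ)) * (r : ℂ) * 1) / (2 * (mu : ℂ) + (lam : ℂ))) 0 :=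
      (((hasDerivAt_id (0 : ℂ)).const_mul (((lam : ℂ) + (mu : ℂ)) * (r : ℂ))).div_const
        _).const_add 1
    have := h1.mul h2
    refine this.congr_deriv ?_
    simp [Complex.exp_zero]
  have hfun : (fun xn : ℝ => lameMultiplier n lam mu ξ xn (Fin.last n)) =
      (fun xn : ℝ => Complex.exp (-(r : ℂ) * (xn : ℂ)) *
        (1 + ((lam : ℂ) + (mu : ℂ)) * (r : ℂ) * (xn : ℂ) / (2 * (mu : ℂ) + (lam : ℂ)))) := by
    funext xn
    simp [lameMultiplier, Fin.last, ← hr]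
  have hderiv : deriv (fun xn : ℝ => lameMultiplier n lam mu ξ xn (Fin.last n)) 0 =
      -(r : ℂ) + ((lam : ℂ) + (mu : ℂ)) * (r : ℂ) / (2 * (mu : ℂ) + (lam : ℂ)) := by
    rw [hfun]
    have := hg.comp_ofReal (z := 0)
    simpa using this.deriv
  -- sum part
  have hval : ∀ j : Fin n, lameMultiplier n lam mu ξ 0 j.castSucc =
      Complex.I * (mu : ℂ) * (ξ j : ℂ) / ((2 * (mu : ℂ) + (lam : ℂ)) * (r : ℂ)) := by
    intro j
    simp [lameMultiplier, j.isLt, ← hr]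
  have hS2 : ∑ j, ((ξ j : ℝ) : ℂ) ^ 2 = (r : ℂ) ^ 2 := by
    have h : (∑ k, ξ k ^ 2) = r ^ 2 := (Real.sq_sqrt hSpos.le).symm
    exact_mod_cast congrArg (Complex.ofReal) h
  have hsum : ∑ j : Fin n, Complex.I * (ξ j : ℂ) * lameMultiplier n lam mu ξ 0 j.castSucc
      = -((mu : ℂ) * (r : ℂ) ^ 2 / ((2 * (mu : ℂ) + (lam : ℂ)) * (r : ℂ))) := by
    calc ∑ j : Fin n, Complex.I * (ξ j : ℂ) * lameMultiplier n lam mu ξ 0 j.castSucc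
        = ∑ j : Fin n, (Complex.I * Complex.I * (mu : ℂ) / ((2 * (mu : ℂ) + (lam : ℂ)) * (r : ℂ)))
            * ((ξ j : ℝ) : ℂ) ^ 2 := by
          refine Finset.sum_congr rfl fun j _ => ?_
          rw [hval j]; ring
      _ = (Complex.I * Complex.I * (mu : ℂ) / ((2 * (mu : ℂ) + (lam : ℂ)) * (r : ℂ))) * (r : ℂ) ^ 2 := by
          rw [← Finset.mul_sum, hS2]
      _ = -((mu : ℂ) * (r : ℂ) ^ 2 / ((2 * (mu : ℂ) + (lam : ℂ)) * (r : ℂ))) := by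
          rw [Complex.I_mul_I]; ring
  rw [hderiv, hsum]
  field_simp
  ring
end

section
/- Let ξ' ∈ ℝ^{n−1} with ξ' ≠ 0, t ≥ 0, and consider the n×n matrix W(ξ', t) = 2π e^{−|ξ'|t} M(ξ', t) where M has entries M_{jℓ} = δ_{jℓ}/(2μ|ξ'|) − κξ_jξ_ℓ/|ξ'|³ − κξ_jξ_ℓ t/|ξ'|² for j, ℓ < n, M_{jn} = M_{nj} = −iκξ_j t/|ξ'| for j < n, and M_{nn} = ν/|ξ'| + κt, with μ, λ > 0, κ = (λ+μ)/(4μ(2μ+λ)), ν = 1/(2μ) − κ. Then W(ξ', 0) is invertible: its determinant equals (2π/|ξ'|)ⁿ · ν · (1/(2μ))^{n−2} · (1/(2μ) − κ). -/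
open Matrix

/-! At `t = 0` the mixed entries `-iκ ξ_j t / |ξ'|` vanish, so the determinant of `W(ξ', 0)` is its
normal corner `2πν/|ξ'|` times the determinant of its tangential block. That block is the rank-one
perturbation `(2π/|ξ'|) (I/(2μ) - (κ/|ξ'|²) ξ' ⊗ ξ')`, whose determinant the matrix determinant lemma
gives as `(2π/|ξ'|)^(n-1) (1/(2μ))^(n-2) (1/(2μ) - κ)`, using `ξ' · ξ' = |ξ'|²`. All three factors
are nonzero because `ν = (3μ + λ) / (4μ(2μ + λ)) > 0`. -/

theorem Matrix.det_eq_mul_det_submatrix_castSucc {R : Type*} [CommRing R] {m : ℕ}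
    (A : Matrix (Fin (m + 1)) (Fin (m + 1)) R)
    (h : ∀ j : Fin m, A (Fin.last m) j.castSucc = 0) :
    A.det = A (Fin.last m) (Fin.last m) * (A.submatrix Fin.castSucc Fin.castSucc).det := by
  rw [det_succ_row A (Fin.last m), Fin.sum_univ_castSucc]
  simp [h, Fin.succAbove_last, ← two_mul, pow_mul]

theorem Matrix.det_smul_one_add_vecMulVec {K n : Type*} [Field K] [Fintype n] [DecidableEq n]
    [Nonempty n] {a : K} (ha : a ≠ 0) (u v : n → K) :
    (a • 1 + vecMulVec u v).det = a ^ (Fintype.card n - 1) * (a + v ⬝ᵥ u) := by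
  have hsplit : a • 1 + vecMulVec u v = a • (1 + vecMulVec (a⁻¹ • u) v) := by
    rw [smul_add, ← smul_vecMulVec, smul_smul, mul_inv_cancel₀ ha, one_smul]
  rw [hsplit, det_smul, vecMulVec_eq Unit, det_one_add_replicateCol_mul_replicateRow,
    dotProduct_smul, ← Nat.sub_add_cancel Fintype.card_pos, pow_succ, Nat.add_sub_cancel,
    smul_eq_mul]
  field_simp

theorem sqrt_sum_sq_pos {ι : Type*} [Fintype ι] {ξ : ι → ℝ} (hξ : ξ ≠ 0) :
    0 < √(∑ k, ξ k ^ 2) := by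
  obtain ⟨k, hk⟩ := Function.ne_iff.1 hξ
  exact Real.sqrt_pos.2 <|
    Finset.sum_pos' (fun _ _ => sq_nonneg _) ⟨k, Finset.mem_univ k, pow_two_pos_of_ne_zero hk⟩

theorem ofReal_comp_dotProduct_self {ι : Type*} [Fintype ι] (ξ : ι → ℝ) :
    (Complex.ofReal ∘ ξ) ⬝ᵥ (Complex.ofReal ∘ ξ) = ((√(∑ k, ξ k ^ 2) : ℝ) : ℂ) ^ 2 := by
  rw [← Complex.ofReal_pow, Real.sq_sqrt (by positivity)]
  simp [dotProduct, sq]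

theorem lame_nu_pos {lam mu : ℝ} (hlam : 0 < lam) (hmu : 0 < mu) :
    0 < 1 / (2 * mu) - (lam + mu) / (4 * mu * (2 * mu + lam)) := by
  have h : 1 / (2 * mu) - (lam + mu) / (4 * mu * (2 * mu + lam)) =
      (3 * mu + lam) / (4 * mu * (2 * mu + lam)) := by
    field_simp
    ring
  rw [h]
  positivity

/-- The total dimension is `n = m + 1`: `Fin m` are the tangential indices (the paper's
`1, …, n−1`) and `Fin.last m` is the normal index. -/
theorem lame_fundamental_matrix_det (m : ℕ) (lam mu : ℝ) (hlam : 0 < lam) (hmu : 0 < mu)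
    (κ ν : ℝ) (hκ : κ = (lam + mu) / (4 * mu * (2 * mu + lam)))
    (hν : ν = 1 / (2 * mu) - κ)
    (ξ : Fin m → ℝ) (hξ : ξ ≠ 0)
    (r : ℝ) (hr : r = Real.sqrt (∑ k, ξ k ^ 2))
    (W : ℝ → Matrix (Fin (m + 1)) (Fin (m + 1)) ℂ)
    (hWtan : ∀ (t : ℝ), 0 ≤ t → ∀ j ℓ : Fin m, W t j.castSucc ℓ.castSucc =
      2 * (Real.pi : ℂ) * Complex.exp (-(r : ℂ) * (t : ℂ)) *
        ((if j = ℓ then (1 : ℂ) else 0) / (2 * (mu : ℂ) * (r : ℂ))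
          - (κ : ℂ) * (ξ j : ℂ) * (ξ ℓ : ℂ) / (r : ℂ) ^ 3
          - (κ : ℂ) * (ξ j : ℂ) * (ξ ℓ : ℂ) * (t : ℂ) / (r : ℂ) ^ 2))
    (hWoff : ∀ (t : ℝ), 0 ≤ t → ∀ j : Fin m,
      W t j.castSucc (Fin.last m) =
        2 * (Real.pi : ℂ) * Complex.exp (-(r : ℂ) * (t : ℂ)) *
          (-Complex.I * (κ : ℂ) * (ξ j : ℂ) * (t : ℂ) / (r : ℂ)) ∧
      W t (Fin.last m) j.castSucc =
        2 * (Real.pi : ℂ) * Complex.exp (-(r : ℂ) * (t : ℂ)) *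
          (-Complex.I * (κ : ℂ) * (ξ j : ℂ) * (t : ℂ) / (r : ℂ)))
    (hWnn : ∀ (t : ℝ), 0 ≤ t → W t (Fin.last m) (Fin.last m) =
      2 * (Real.pi : ℂ) * Complex.exp (-(r : ℂ) * (t : ℂ)) *
        ((ν : ℂ) / (r : ℂ) + (κ : ℂ) * (t : ℂ))) :
    (W 0).det = ((2 * (Real.pi : ℂ) / (r : ℂ)) ^ (m + 1)) * (ν : ℂ) *
        ((1 / (2 * (mu : ℂ))) ^ (m - 1)) * (1 / (2 * (mu : ℂ)) - (κ : ℂ)) ∧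
      IsUnit (W 0).det := by
  obtain ⟨k, -⟩ := Function.ne_iff.1 hξ
  have : Nonempty (Fin m) := ⟨k⟩
  have hr0 : (r : ℂ) ≠ 0 := by exact_mod_cast hr ▸ (sqrt_sum_sq_pos hξ).ne'
  have hmu0 : (mu : ℂ) ≠ 0 := by exact_mod_cast hmu.ne'
  have hν0 : (ν : ℂ) ≠ 0 := by exact_mod_cast hν ▸ hκ ▸ (lame_nu_pos hlam hmu).ne'
  have hνC : 1 / (2 * (mu : ℂ)) - κ = ν := by
    rw [hν]
    push_cast
    ring
  have htan : (W 0).submatrix Fin.castSucc Fin.castSucc = (2 * Real.pi / r : ℂ) •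
      ((1 / (2 * mu) : ℂ) • 1 +
        vecMulVec (Complex.ofReal ∘ ξ) (-(κ / r ^ 2 : ℂ) • (Complex.ofReal ∘ ξ))) := by
    ext j ℓ
    rw [submatrix_apply, hWtan 0 le_rfl]
    rcases eq_or_ne j ℓ with rfl | h
    · simp [vecMulVec_apply]
      field_simp
      ring
    · simp [h, vecMulVec_apply]
      field_simp
  rw [hνC]
  have hdet : (W 0).det =
      (2 * (Real.pi : ℂ) / r) ^ (m + 1) * ν * (1 / (2 * (mu : ℂ))) ^ (m - 1) * ν := by
    rw [det_eq_mul_det_submatrix_castSucc _ fun j => by simp [(hWoff 0 le_rfl j).2], htan,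
      det_smul, det_smul_one_add_vecMulVec (by simpa using hmu0), smul_dotProduct,
      ofReal_comp_dotProduct_self, ← hr, hWnn 0 le_rfl, Fintype.card_fin, Complex.ofReal_zero,
      mul_zero, Complex.exp_zero, smul_eq_mul, neg_mul, div_mul_cancel₀ _ (pow_ne_zero 2 hr0),
      ← sub_eq_add_neg, hνC]
    ring
  refine ⟨hdet, hdet ▸ isUnit_iff_ne_zero.2 ?_⟩
  simp [hν0, hr0, hmu0, Real.pi_ne_zero]
end
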